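/- Let (K,D_K) ⊆ (L,D_L) be an extension of 𝔤-fields, and let C_K and C_L be the fields of constants of K and L respectively (so C_K = C_L ∩ K). Then K and C_L are linearly disjoint over C_K inside L: every finite family of elements of K that is linearly independent over C_K remains linearly independent over C_L when regarded in L. -/

import Mathlib

/-!
Constants of `L` that are linearly independent over `C_K` stay linearly independent over `K`:
normalise a `K`-relation of minimal support to have a coefficient `1` and apply a first-order
`Dᵢ`; since the `Dᵢ` are derivations vanishing on the constants of `L`, this kills that
coefficient and leaves a relation of smaller support, hence the zero relation, so all
coefficients lie in `C_K`. Thus `K` and `C_L` are linearly disjoint over `C_K`, and linear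
disjointness is symmetric.
-/

open scoped TensorProduct

noncomputable section

/-- The ideal `(X₁^pm, …, X_e^pm)` of the polynomial ring `k[X₁,…,X_e]`. -/
def TruncIdeal (k : Type*) [CommRing k] (e pm : ℕ) : Ideal (MvPolynomial (Fin e) k) :=
  Ideal.span (Set.range fun t : Fin e => (MvPolynomial.X t : MvPolynomial (Fin e) k) ^ pm)

/-- The truncated polynomial algebra `A = k[X₁,…,X_e]/(X₁^pm, …, X_e^pm)`. -/
abbrev TruncAlg (k : Type*) [CommRing k] (e pm : ℕ) :=
  MvPolynomial (Fin e) k ⧸ TruncIdeal k e pm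

/-- The image of the monomial `X^i` in the truncated polynomial algebra. -/
def XA (k : Type*) [CommRing k] (e pm : ℕ) (i : Fin e →₀ ℕ) : TruncAlg k e pm :=
  Ideal.Quotient.mk (TruncIdeal k e pm) (MvPolynomial.monomial i (1 : k))

/-- The finite set `[pm]^e` of multi-indices `i` with `i t ≤ pm - 1` for all `t`. -/
def box (e pm : ℕ) : Finset (Fin e →₀ ℕ) :=
  Finset.Iic (Finsupp.equivFunOnFinite.symm fun _ => pm - 1)

/-- The total degree `|i| = i 1 + … + i e` of a multi-index. -/
def mdeg {e : ℕ} (i : Fin e →₀ ℕ) : ℕ := ∑ t, i t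

/-- A `k`-Hopf algebra structure on the truncated polynomial algebra `A`, whose counit is
evaluation at `X = 0`; i.e. a truncated group scheme `𝔤` with underlying scheme `Spec A`. -/
structure TruncHopf (k : Type*) [CommRing k] (e pm : ℕ) where
  /-- the comultiplication `Δ : A → A ⊗[k] A`, a `k`-algebra homomorphism -/
  comul : TruncAlg k e pm →ₐ[k] TruncAlg k e pm ⊗[k] TruncAlg k e pm
  /-- the counit `ε : A → k` -/
  counit : TruncAlg k e pm →ₐ[k] k
  /-- the counit is evaluation at `X = 0` -/
  counit_monomial : ∀ i : Fin e →₀ ℕ, counit (XA k e pm i) = if i = 0 then 1 else 0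
  /-- coassociativity of `Δ` -/
  coassoc : (Algebra.TensorProduct.assoc k k k (TruncAlg k e pm) (TruncAlg k e pm)
        (TruncAlg k e pm)).toAlgHom.comp
        ((Algebra.TensorProduct.map comul (AlgHom.id k (TruncAlg k e pm))).comp comul)
      = (Algebra.TensorProduct.map (AlgHom.id k (TruncAlg k e pm)) comul).comp comul
  /-- left counit axiom: `(ε ⊗ id) ∘ Δ = id` -/
  counit_comul_left : (Algebra.TensorProduct.lid k (TruncAlg k e pm)).toAlgHom.comp
        ((Algebra.TensorProduct.map counit (AlgHom.id k (TruncAlg k e pm))).comp comul)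
      = AlgHom.id k (TruncAlg k e pm)
  /-- right counit axiom: `(id ⊗ ε) ∘ Δ = id` -/
  counit_comul_right : (Algebra.TensorProduct.rid k k (TruncAlg k e pm)).toAlgHom.comp
        ((Algebra.TensorProduct.map (AlgHom.id k (TruncAlg k e pm)) counit).comp comul)
      = AlgHom.id k (TruncAlg k e pm)
  /-- the antipode `S : A → A` -/
  antipode : TruncAlg k e pm →ₗ[k] TruncAlg k e pm
  /-- left antipode axiom: `m ∘ (S ⊗ id) ∘ Δ = η ∘ ε` -/
  antipode_left : (LinearMap.mul' k (TruncAlg k e pm)).comp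
        ((TensorProduct.map antipode LinearMap.id).comp comul.toLinearMap)
      = (Algebra.linearMap k (TruncAlg k e pm)).comp counit.toLinearMap
  /-- right antipode axiom: `m ∘ (id ⊗ S) ∘ Δ = η ∘ ε` -/
  antipode_right : (LinearMap.mul' k (TruncAlg k e pm)).comp
        ((TensorProduct.map LinearMap.id antipode).comp comul.toLinearMap)
      = (Algebra.linearMap k (TruncAlg k e pm)).comp counit.toLinearMap

/-- An `pm`-truncated `e`-dimensional Hasse–Schmidt derivation on the commutative `k`-algebra
`R`, given by its family of coefficients `D i : R → R` (for multi-indices `i ∈ [pm]^e`):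
equivalently, a `k`-algebra homomorphism `R → R ⊗[k] A` (with `A` the truncated polynomial
algebra in `e` variables) which is a section of the projection `R ⊗[k] A → R` killing the
variables. -/
structure TruncHSDer (k R : Type*) [CommRing k] [CommRing R] [Algebra k R] (e pm : ℕ) where
  /-- the coefficient maps `D_i`, each of which is `k`-linear -/
  D : (Fin e →₀ ℕ) → R →ₗ[k] R
  D_zero : D 0 = LinearMap.id
  D_one : ∀ i : Fin e →₀ ℕ, i ≠ 0 → D i 1 = 0
  D_mul : ∀ i : Fin e →₀ ℕ, (∀ t, i t < pm) → ∀ x y : R,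
    D i (x * y) = ∑ q ∈ Finset.HasAntidiagonal.antidiagonal i, D q.1 x * D q.2 y
  D_trunc : ∀ i : Fin e →₀ ℕ, (∃ t, pm ≤ i t) → D i = 0

/-- `D` is a `𝔤`-derivation for the truncated group scheme `𝔤` given by the Hopf algebra `H`:
the associated map `D : R → R ⊗[k] A`, `r ↦ ∑ᵢ Dᵢ(r) ⊗ X^i`, is coassociative, i.e.
`(D ⊗ id_A) ∘ D = (id_R ⊗ Δ) ∘ D` (so `R` is an `A`-comodule algebra). -/
def IsGDer {k R : Type*} [CommRing k] [CommRing R] [Algebra k R] {e pm : ℕ}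
    (H : TruncHopf k e pm) (D : TruncHSDer k R e pm) : Prop :=
  ∀ r : R,
    (TensorProduct.assoc k R (TruncAlg k e pm) (TruncAlg k e pm))
        (∑ i ∈ box e pm,
          (∑ j ∈ box e pm, D.D j (D.D i r) ⊗ₜ[k] XA k e pm j) ⊗ₜ[k] XA k e pm i)
      = ∑ i ∈ box e pm, D.D i r ⊗ₜ[k] H.comul (XA k e pm i)

/-- `(K, D)` is strict: the ring of constants `⋂_{|i| = 1} ker Dᵢ` coincides with
`K^p = {x^p : x ∈ K}`. -/
def IsStrictT {k K : Type*} [CommRing k] [CommRing K] [Algebra k K] {e pm : ℕ} (p : ℕ)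
    (D : TruncHSDer k K e pm) : Prop :=
  ∀ x : K, (∀ i : Fin e →₀ ℕ, mdeg i = 1 → D.D i x = 0) ↔ ∃ y : K, y ^ p = x

lemma mdeg_eq_degree {e : ℕ} (i : Fin e →₀ ℕ) : mdeg i = i.degree :=
  (Finsupp.degree_eq_sum i).symm

lemma ne_zero_of_mdeg_eq_one {e : ℕ} {i : Fin e →₀ ℕ} (hi : mdeg i = 1) : i ≠ 0 := by
  rintro rfl
  simp [mdeg] at hi

lemma antidiagonal_eq_pair_of_mdeg_eq_one {e : ℕ} {i : Fin e →₀ ℕ} (hi : mdeg i = 1) :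
    Finset.HasAntidiagonal.antidiagonal i = {(0, i), (i, 0)} := by
  ext ⟨a, b⟩
  simp only [Finset.HasAntidiagonal.mem_antidiagonal, Finset.mem_insert, Finset.mem_singleton,
    Prod.mk.injEq]
  constructor
  · rintro rfl
    rw [mdeg_eq_degree, map_add] at hi
    rcases Nat.add_eq_one_iff.mp hi with ⟨ha, -⟩ | ⟨-, hb⟩
    · rw [Finsupp.degree_eq_zero_iff] at ha
      simp [ha]
    · rw [Finsupp.degree_eq_zero_iff] at hb
      simp [hb]
  · rintro (⟨rfl, rfl⟩ | ⟨rfl, rfl⟩) <;> simp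

namespace TruncHSDer

variable {k : Type*} [CommRing k] {e pm : ℕ}

theorem D_mul_of_mdeg_eq_one {R : Type*} [CommRing R] [Algebra k R] (D : TruncHSDer k R e pm)
    {i : Fin e →₀ ℕ} (hi : mdeg i = 1) (x y : R) :
    D.D i (x * y) = x * D.D i y + D.D i x * y := by
  by_cases hlt : ∀ t, i t < pm
  · rw [D.D_mul i hlt, antidiagonal_eq_pair_of_mdeg_eq_one hi,
      Finset.sum_pair (by simpa [eq_comm] using ne_zero_of_mdeg_eq_one hi), D.D_zero,
      LinearMap.id_apply, LinearMap.id_apply]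
  · push Not at hlt
    simp [D.D_trunc i hlt]

def constants {K : Type*} [Field K] [Algebra k K] (D : TruncHSDer k K e pm) : Subfield K where
  carrier := {x | ∀ i : Fin e →₀ ℕ, mdeg i = 1 → D.D i x = 0}
  mul_mem' {a b} ha hb i hi := by simp [D.D_mul_of_mdeg_eq_one hi, ha i hi, hb i hi]
  one_mem' i hi := D.D_one i (ne_zero_of_mdeg_eq_one hi)
  add_mem' {a b} ha hb i hi := by simp [ha i hi, hb i hi]
  zero_mem' i _ := map_zero _
  neg_mem' {a} ha i hi := by simp [ha i hi]
  inv_mem' a ha i hi := by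
    rcases eq_or_ne a 0 with rfl | ha0
    · simp
    · have h := D.D_mul_of_mdeg_eq_one hi a a⁻¹
      rw [mul_inv_cancel₀ ha0, D.D_one i (ne_zero_of_mdeg_eq_one hi), ha i hi, zero_mul,
        add_zero, eq_comm, mul_eq_zero] at h
      exact h.resolve_left ha0

variable {K L : Type*} [Field K] [Field L] [Algebra k K] [Algebra k L] [Algebra K L]

def Extends (DL : TruncHSDer k L e pm) (DK : TruncHSDer k K e pm) : Prop :=
  ∀ (i : Fin e →₀ ℕ) (x : K), DL.D i (algebraMap K L x) = algebraMap K L (DK.D i x)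

variable {DK : TruncHSDer k K e pm} {DL : TruncHSDer k L e pm}

lemma algebraMap_mem_constants (hext : DL.Extends DK) {x : K} (hx : x ∈ DK.constants) :
    algebraMap K L x ∈ DL.constants := fun i hi => by
  rw [hext, hx i hi, map_zero]

lemma D_smul_of_mem_constants (hext : DL.Extends DK) {i : Fin e →₀ ℕ} (hi : mdeg i = 1) (a : K)
    {c : L} (hc : c ∈ DL.constants) :
    DL.D i (a • c) = DK.D i a • c := by
  rw [Algebra.smul_def, Algebra.smul_def, DL.D_mul_of_mdeg_eq_one hi, hc i hi, mul_zero, zero_add,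
    hext]

theorem linearIndependent_of_mem_constants
    (hext : DL.Extends DK) {ι : Type*} {c : ι → L} (hc : ∀ j, c j ∈ DL.constants)
    (hind : LinearIndependent DK.constants c) : LinearIndependent K c := by
  classical
  refine linearIndependent_iff'.mpr fun s => ?_
  induction s using Finset.strongInduction with
  | H s ih =>
    intro g hg j₀ hj₀
    by_contra hg₀
    set g' : ι → K := fun j => (g j₀)⁻¹ * g j
    have hg'₀ : g' j₀ = 1 := inv_mul_cancel₀ hg₀
    have hg' : ∑ j ∈ s, g' j • c j = 0 := by
      simp only [g', mul_smul, ← Finset.smul_sum, hg, smul_zero]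
    have hconst : ∀ j ∈ s, g' j ∈ DK.constants := by
      intro j hjs i hi
      have hD1 : DK.D i (g' j₀) = 0 := by rw [hg'₀, DK.D_one i (ne_zero_of_mdeg_eq_one hi)]
      have hDg' : ∑ j ∈ s.erase j₀, DK.D i (g' j) • c j = 0 := by
        rw [Finset.sum_erase _ (by rw [hD1, zero_smul])]
        simp_rw [← D_smul_of_mem_constants hext hi _ (hc _)]
        rw [← map_sum, hg', map_zero]
      by_cases hj : j = j₀
      · rwa [hj]
      · exact ih _ (Finset.erase_ssubset hj₀) _ hDg' j (Finset.mem_erase.mpr ⟨hj, hjs⟩)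
    set f : ι → DK.constants := fun j => if h : j ∈ s then ⟨g' j, hconst j h⟩ else 0
    have hf : ∑ j ∈ s, f j • c j = 0 := by
      rw [← hg']
      refine Finset.sum_congr rfl fun j hj => ?_
      simp only [f, dif_pos hj]
      rfl
    have hf₀ : f j₀ = 0 := linearIndependent_iff'.mp hind s f hf j₀ hj₀
    have : g' j₀ = 0 := by simpa [f, hj₀] using congrArg Subtype.val hf₀
    exact one_ne_zero (hg'₀ ▸ this)

def constantsIntermediateField (hext : DL.Extends DK) : IntermediateField DK.constants L :=
  DL.constants.toIntermediateField fun x => algebraMap_mem_constants hext x.2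

theorem linearDisjoint_constantsIntermediateField (hext : DL.Extends DK) :
    (constantsIntermediateField hext).LinearDisjoint K := by
  set CL := constantsIntermediateField hext
  let b := Module.Basis.ofVectorSpace DK.constants CL
  refine .of_basis_left b (linearIndependent_of_mem_constants hext (fun j => (b j).2) ?_)
  exact b.linearIndependent.map' CL.val.toLinearMap (LinearMap.ker_eq_bot.mpr CL.val.injective)

end TruncHSDer

universe u

theorem constants_linearly_disjoint_general
    (p : ℕ) (e m : ℕ)
    (k : Type u) [Field k]
    (K L : Type u) [Field K] [Field L] [Algebra k K] [Algebra k L]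
    [Algebra K L]
    (DK : TruncHSDer k K e (p ^ m)) (DL : TruncHSDer k L e (p ^ m))
    (hext : ∀ (i : Fin e →₀ ℕ) (x : K), DL.D i (algebraMap K L x) = algebraMap K L (DK.D i x))
    (n : ℕ) (x : Fin n → K)
    (hind : ∀ a : Fin n → K,
      (∀ j, ∀ i : Fin e →₀ ℕ, mdeg i = 1 → DK.D i (a j) = 0) →
      ∑ j, a j * x j = 0 → ∀ j, a j = 0) :
    ∀ b : Fin n → L,
      (∀ j, ∀ i : Fin e →₀ ℕ, mdeg i = 1 → DL.D i (b j) = 0) →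
      ∑ j, b j * algebraMap K L (x j) = 0 → ∀ j, b j = 0 := by
  intro b hb hrel
  have hx : LinearIndependent DK.constants x :=
    Fintype.linearIndependent_iff.mpr fun a ha j =>
      Subtype.ext (hind (a ·) (fun j => (a j).2) ha j)
  have hxL : LinearIndependent (TruncHSDer.constantsIntermediateField hext) (algebraMap K L ∘ x) :=
    (TruncHSDer.linearDisjoint_constantsIntermediateField hext).linearIndependent_right' hx
  exact fun j =>
    congrArg Subtype.val (Fintype.linearIndependent_iff.mp hxL (fun j => ⟨b j, hb j⟩) hrel j)

/-- For an extension `(K, D_K) ⊆ (L, D_L)` of `𝔤`-fields, `K` and the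
constants `C_L` of `L` are linearly disjoint over the constants `C_K` of `K` inside `L`:
any finite family of elements of `K` linearly independent over `C_K` stays linearly
independent over `C_L`. -/
theorem constants_linearly_disjoint
    (p : ℕ) [Fact p.Prime] (e m : ℕ) (he : 0 < e) (hm : 0 < m)
    (k : Type u) [Field k] [CharP k p] [ExpChar k p] [PerfectRing k p]
    (K L : Type u) [Field K] [Field L] [Algebra k K] [Algebra k L]
    [Algebra K L] [IsScalarTower k K L]
    (H : TruncHopf k e (p ^ m))
    (DK : TruncHSDer k K e (p ^ m)) (DL : TruncHSDer k L e (p ^ m))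
    (hDK : IsGDer H DK) (hDL : IsGDer H DL)
    (hext : ∀ (i : Fin e →₀ ℕ) (x : K), DL.D i (algebraMap K L x) = algebraMap K L (DK.D i x))
    (n : ℕ) (x : Fin n → K)
    (hind : ∀ a : Fin n → K,
      (∀ j, ∀ i : Fin e →₀ ℕ, mdeg i = 1 → DK.D i (a j) = 0) →
      ∑ j, a j * x j = 0 → ∀ j, a j = 0) :
    ∀ b : Fin n → L,
      (∀ j, ∀ i : Fin e →₀ ℕ, mdeg i = 1 → DL.D i (b j) = 0) →
      ∑ j, b j * algebraMap K L (x j) = 0 → ∀ j, b j = 0 :=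
  constants_linearly_disjoint_general p e m k K L DK DL hext n x hind
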